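/- arXiv:math/9907103 — 2 statements merged into one kernel-verified Lean document; each statement's English description precedes it below -/
import Mathlib

section
/- Let L be a complex Hilbert space and G a set of unitary operators on L that is closed under taking inverses (e.g., a group of unitary operators). Suppose that the commutant of G is abelian, i.e., any two bounded operators on L that each commute with every element of G commute with each other. Let (M, D) be a symmetric operator with dense domain D ⊆ L such that D is stable under every u ∈ G and M(u·φ) = u·(M(φ)) for all φ ∈ D, u ∈ G. Then M is essentially self-adjoint, i.e., the closure of M is self-adjoint (equivalently, the adjoint M* of M is self-adjoint). -/
/-!
The Cayley transform `(T + i)φ ↦ (T - i)φ` is an isometry of `ran (T + i)` onto `ran (T - i)`.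
Extended by zero on `ran (T + i)ᗮ` it becomes a bounded operator `W` commuting with `G`, and so
does `W*` because `G` is closed under inverses. The commutant being abelian, `W` is normal, so
`ran (T + i)ᗮ = ker W = ker W* = ran (T - i)ᗮ`. A vector orthogonal to both ranges is orthogonal
to `(T + i)φ - (T - i)φ = 2iφ` for every `φ` in the dense domain, hence zero. So both ranges are
dense, which is von Neumann's criterion for `T` to be essentially self-adjoint: `(a, b) ↦ b + ia`
is bounded below on the closure of the graph of `T`, so its image there is closed and dense, and
every point of the graph of `T*` lies in that closure up to an element of
`ker (T* + i) = ran (T - i)ᗮ = 0`. Hence `T*` is symmetric.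
-/

open scoped InnerProductSpace

namespace Submodule

variable {𝕜 E : Type*} [RCLike 𝕜] [NormedAddCommGroup E] [InnerProductSpace 𝕜 E]

theorem denseRange_coprod_subtype_orthogonal [CompleteSpace E] (R : Submodule 𝕜 E) :
    DenseRange (R.subtype.coprod Rᗮ.subtype) := by
  rw [DenseRange, ← LinearMap.coe_range, LinearMap.range_coprod, range_subtype, range_subtype,
    dense_iff_topologicalClosure_eq_top, topologicalClosure_eq_top_iff, ← inf_orthogonal,
    inf_orthogonal_eq_bot]

theorem norm_le_norm_add_of_mem_orthogonal {R : Submodule 𝕜 E} {r s : E} (hr : r ∈ R)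
    (hs : s ∈ Rᗮ) : ‖r‖ ≤ ‖r + s‖ := by
  have h := norm_add_sq_eq_norm_sq_add_norm_sq_of_inner_eq_zero r s
    (R.inner_right_of_mem_orthogonal hr hs)
  nlinarith [norm_nonneg r, norm_nonneg (r + s), sq_nonneg ‖s‖]

theorem map_mem_orthogonal {R : Submodule 𝕜 E} (u : E ≃ₗᵢ[𝕜] E)
    (hR : ∀ r ∈ R, u.symm r ∈ R) {s : E} (hs : s ∈ Rᗮ) : u s ∈ Rᗮ := fun r hr => by
  rw [← u.apply_symm_apply r, u.inner_map_map]
  exact inner_right_of_mem_orthogonal (hR r hr) hs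

end Submodule

namespace ContinuousLinearMap

variable {𝕜 E : Type*} [RCLike 𝕜] [NormedAddCommGroup E] [InnerProductSpace 𝕜 E] [CompleteSpace E]

theorem adjoint_apply_map {A : E →L[𝕜] E} {u : E ≃ₗᵢ[𝕜] E}
    (h : ∀ x, A (u.symm x) = u.symm (A x)) (x : E) : adjoint A (u x) = u (adjoint A x) :=
  ext_inner_right 𝕜 fun y => by
    rw [adjoint_inner_left, u.inner_map_eq_flip, ← h, ← adjoint_inner_left, ← u.inner_map_eq_flip]

end ContinuousLinearMap

namespace LinearIsometry

variable {𝕜 E F : Type*} [RCLike 𝕜] [NormedAddCommGroup E] [InnerProductSpace 𝕜 E]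
  [CompleteSpace E] [NormedAddCommGroup F] [InnerProductSpace 𝕜 F] [CompleteSpace F]
  {R : Submodule 𝕜 E}

noncomputable def extendByZero (f : R →ₗᵢ[𝕜] F) : E →L[𝕜] F :=
  (f.toLinearMap ∘ₗ LinearMap.fst 𝕜 R Rᗮ).extendOfNorm (R.subtype.coprod Rᗮ.subtype)

variable (f : R →ₗᵢ[𝕜] F)

theorem extendByZero_apply_add (r : R) (s : Rᗮ) : f.extendByZero (r + s) = f r := by
  have hbound : ∀ p : R × Rᗮ, ‖(f.toLinearMap ∘ₗ LinearMap.fst 𝕜 R Rᗮ) p‖ ≤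
      1 * ‖R.subtype.coprod Rᗮ.subtype p‖ := fun p => by
    simpa using Submodule.norm_le_norm_add_of_mem_orthogonal p.1.2 p.2.2
  exact LinearMap.extendOfNorm_eq R.denseRange_coprod_subtype_orthogonal ⟨1, hbound⟩ (r, s)

theorem extendByZero_apply_coe (r : R) : f.extendByZero r = f r := by
  simpa using f.extendByZero_apply_add r 0

theorem extendByZero_apply_of_mem_orthogonal {s : E} (hs : s ∈ Rᗮ) : f.extendByZero s = 0 := by
  simpa using f.extendByZero_apply_add 0 ⟨s, hs⟩

theorem norm_extendByZero_apply_of_mem_closure {x : E} (hx : x ∈ R.topologicalClosure) :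
    ‖f.extendByZero x‖ = ‖x‖ := by
  have hclosed : IsClosed {x : E | ‖f.extendByZero x‖ = ‖x‖} :=
    isClosed_eq (by fun_prop) (by fun_prop)
  rw [← SetLike.mem_coe, R.topologicalClosure_coe] at hx
  refine closure_minimal (fun r hr => ?_) hclosed hx
  simp [f.extendByZero_apply_coe ⟨r, hr⟩]

theorem ker_extendByZero : f.extendByZero.ker = Rᗮ := by
  refine le_antisymm (fun x hx => ?_) fun s hs => f.extendByZero_apply_of_mem_orthogonal hs
  obtain ⟨k, hk, s, hs, rfl⟩ :=
    Submodule.exists_add_mem_mem_orthogonal (K := R.topologicalClosure) x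
  rw [R.orthogonal_closure] at hs
  have hWk : f.extendByZero k = 0 := by
    simpa [f.extendByZero_apply_of_mem_orthogonal hs] using hx
  have hk0 : k = 0 := by
    rw [← norm_eq_zero, ← f.norm_extendByZero_apply_of_mem_closure hk, hWk, norm_zero]
  simpa [hk0] using hs

theorem orthogonal_range_extendByZero :
    f.extendByZero.rangeᗮ = (LinearMap.range f.toLinearMap)ᗮ := by
  ext x
  simp only [Submodule.mem_orthogonal, LinearMap.mem_range, forall_exists_index,
    forall_apply_eq_imp_iff]
  refine ⟨fun h r => f.extendByZero_apply_coe r ▸ h r, fun h => congrFun ?_⟩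
  refine R.denseRange_coprod_subtype_orthogonal.equalizer
    (g := fun y => ⟪f.extendByZero y, x⟫_𝕜) (by fun_prop) continuous_const ?_
  ext ⟨r, s⟩
  simpa [f.extendByZero_apply_add] using h r

theorem extendByZero_map (u : E ≃ₗᵢ[𝕜] E) (v : F ≃ₗᵢ[𝕜] F) (hR : ∀ r ∈ R, u r ∈ R)
    (hR' : ∀ r ∈ R, u.symm r ∈ R) (hf : ∀ r : R, f ⟨u r, hR r r.2⟩ = v (f r)) (x : E) :
    f.extendByZero (u x) = v (f.extendByZero x) := by
  refine congrFun (R.denseRange_coprod_subtype_orthogonal.equalizer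
    (g := fun x => f.extendByZero (u x)) (h := fun x => v (f.extendByZero x)) (by fun_prop)
    (by fun_prop) ?_) x
  ext ⟨r, s⟩
  simp only [Function.comp_apply, LinearMap.coprod_apply, Submodule.coe_subtype, map_add]
  rw [f.extendByZero_apply_of_mem_orthogonal (Submodule.map_mem_orthogonal u hR' s.2),
    f.extendByZero_apply_of_mem_orthogonal s.2, map_zero, add_zero, add_zero,
    f.extendByZero_apply_coe r, ← hf]
  exact f.extendByZero_apply_coe ⟨u r, hR r r.2⟩

end LinearIsometry

namespace LinearPMap

theorem adjoint_le_adjoint {𝕜 E F : Type*} [RCLike 𝕜] [NormedAddCommGroup E]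
    [InnerProductSpace 𝕜 E] [CompleteSpace E] [NormedAddCommGroup F] [InnerProductSpace 𝕜 F]
    {T S : E →ₗ.[𝕜] F} (hT : Dense (T.domain : Set E)) (h : T ≤ S) : S† ≤ T† := by
  refine IsFormalAdjoint.le_adjoint hT fun a b => ?_
  rw [h.2 (x := a) (y := ⟨a, h.1 a.2⟩) rfl]
  exact (adjoint_isFormalAdjoint (hT.mono h.1)).symm ⟨a, h.1 a.2⟩ b

open Complex

variable {L : Type*} [NormedAddCommGroup L] [InnerProductSpace ℂ L]

def addScalar (T : L →ₗ.[ℂ] L) (c : ℂ) : T.domain →ₗ[ℂ] L := T.toFun + c • T.domain.subtype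

@[simp]
theorem addScalar_apply (T : L →ₗ.[ℂ] L) (c : ℂ) (φ : T.domain) :
    T.addScalar c φ = T φ + c • (φ : L) := rfl

variable {T : L →ₗ.[ℂ] L}

theorem inf_orthogonal_range_addScalar_eq_bot (hdense : Dense (T.domain : Set L)) {c d : ℂ}
    (hcd : c ≠ d) :
    (LinearMap.range (T.addScalar c))ᗮ ⊓ (LinearMap.range (T.addScalar d))ᗮ = ⊥ := by
  refine (Submodule.eq_bot_iff _).2 fun x ⟨hc, hd⟩ => hdense.eq_zero_of_inner_left ℂ ?_
  intro v hv
  have h := congrArg₂ (· - ·)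
    (Submodule.inner_left_of_mem_orthogonal (LinearMap.mem_range_self _ ⟨v, hv⟩) hc)
    (Submodule.inner_left_of_mem_orthogonal (LinearMap.mem_range_self _ ⟨v, hv⟩) hd)
  simp only [addScalar_apply, ← inner_sub_right, add_sub_add_left_eq_sub, ← sub_smul,
    inner_smul_right, sub_zero] at h
  exact (mul_eq_zero.1 h).resolve_left (sub_ne_zero.2 hcd)

section Symmetric

variable (hT : T.IsFormalAdjoint T)
include hT

theorem norm_addScalar_sq {c : ℂ} (hc : c.re = 0) (φ : T.domain) :
    ‖T.addScalar c φ‖ ^ 2 = ‖T φ‖ ^ 2 + ‖c‖ ^ 2 * ‖(φ : L)‖ ^ 2 := by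
  have hreal : (⟪T φ, (φ : L)⟫_ℂ).im = 0 := by
    rw [← conj_eq_iff_im, inner_conj_symm]
    exact (hT φ φ).symm
  rw [addScalar_apply, @norm_add_sq ℂ, inner_smul_right, norm_smul, mul_pow]
  simp [hc, hreal]

theorem norm_addScalar_neg_I (φ : T.domain) : ‖T.addScalar (-I) φ‖ = ‖T.addScalar I φ‖ := by
  rw [← sq_eq_sq₀ (norm_nonneg _) (norm_nonneg _), norm_addScalar_sq hT (by simp),
    norm_addScalar_sq hT I_re, norm_neg]

theorem norm_prod_le_norm_addScalar_I (φ : T.domain) :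
    ‖((φ : L), T φ)‖ ≤ ‖T.addScalar I φ‖ := by
  have h := norm_addScalar_sq hT I_re φ
  rw [norm_I, one_pow, one_mul] at h
  rw [Prod.norm_mk, max_le_iff]
  constructor <;> nlinarith [norm_nonneg (T.addScalar I φ), norm_nonneg (T φ), norm_nonneg (φ : L)]

theorem injective_addScalar_I : Function.Injective (T.addScalar I) := by
  refine (injective_iff_map_eq_zero _).2 fun φ hφ => ?_
  have h := (norm_fst_le ((φ : L), T φ)).trans (norm_prod_le_norm_addScalar_I hT φ)
  rw [hφ, norm_zero] at h
  exact Subtype.ext (norm_le_zero_iff.1 h)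

noncomputable def cayley : LinearMap.range (T.addScalar I) →ₗᵢ[ℂ] L where
  toLinearMap := T.addScalar (-I) ∘ₗ
    (LinearEquiv.ofInjective _ (injective_addScalar_I hT)).symm.toLinearMap
  norm_map' := by
    intro r
    obtain ⟨φ, rfl⟩ := (LinearEquiv.ofInjective _ (injective_addScalar_I hT)).surjective r
    simpa using norm_addScalar_neg_I hT φ

theorem cayley_apply (φ : T.domain) :
    cayley hT ⟨T.addScalar I φ, φ, rfl⟩ = T.addScalar (-I) φ :=
  congrArg (T.addScalar (-I))
    ((LinearEquiv.ofInjective _ (injective_addScalar_I hT)).symm_apply_apply φ)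

theorem range_cayley :
    LinearMap.range (cayley hT).toLinearMap = LinearMap.range (T.addScalar (-I)) :=
  LinearMap.range_comp_of_range_eq_top _ (LinearEquiv.range _)

end Symmetric

section Commute

variable {u : L ≃ₗᵢ[ℂ] L} (hu : ∀ φ : T.domain, ∃ h : u φ ∈ T.domain, T ⟨u φ, h⟩ = u (T φ))
include hu

theorem map_mem_range_addScalar (c : ℂ) {r : L} (hr : r ∈ LinearMap.range (T.addScalar c)) :
    u r ∈ LinearMap.range (T.addScalar c) := by
  obtain ⟨φ, rfl⟩ := hr
  obtain ⟨h, hTu⟩ := hu φ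
  exact ⟨⟨u φ, h⟩, by simp [hTu]⟩

theorem cayley_map (hT : T.IsFormalAdjoint T) (r : LinearMap.range (T.addScalar I)) :
    cayley hT ⟨u r, map_mem_range_addScalar hu I r.2⟩ = u (cayley hT r) := by
  obtain ⟨_, φ, rfl⟩ := r
  obtain ⟨h, hTu⟩ := hu φ
  have : (⟨u (T.addScalar I φ), map_mem_range_addScalar hu I ⟨φ, rfl⟩⟩ :
      LinearMap.range (T.addScalar I)) = ⟨T.addScalar I ⟨u φ, h⟩, _, rfl⟩ := by
    ext; simp [hTu]
  rw [this, cayley_apply, cayley_apply]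
  simp [hTu]

end Commute

variable [CompleteSpace L]

theorem extendByZero_cayley_map (hT : T.IsFormalAdjoint T) (u : L ≃ₗᵢ[ℂ] L)
    (hu : ∀ φ : T.domain, ∃ h : u φ ∈ T.domain, T ⟨u φ, h⟩ = u (T φ))
    (hu' : ∀ φ : T.domain, ∃ h : u.symm φ ∈ T.domain, T ⟨u.symm φ, h⟩ = u.symm (T φ)) (x : L) :
    (cayley hT).extendByZero (u x) = u ((cayley hT).extendByZero x) :=
  (cayley hT).extendByZero_map u u (fun _ => map_mem_range_addScalar hu I)
    (fun _ => map_mem_range_addScalar hu' I) (cayley_map hu hT) x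

theorem dense_range_addScalar_of_isStarNormal (hdense : Dense (T.domain : Set L))
    (hT : T.IsFormalAdjoint T) (hW : IsStarNormal (cayley hT).extendByZero) :
    Dense (LinearMap.range (T.addScalar I) : Set L) ∧
      Dense (LinearMap.range (T.addScalar (-I)) : Set L) := by
  have heq : (LinearMap.range (T.addScalar I))ᗮ = (LinearMap.range (T.addScalar (-I)))ᗮ := by
    rw [← (cayley hT).ker_extendByZero, ← ContinuousLinearMap.IsStarNormal.orthogonal_range hW,
      (cayley hT).orthogonal_range_extendByZero, range_cayley]
  have hbot := inf_orthogonal_range_addScalar_eq_bot hdense (c := I) (d := -I)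
    (by norm_num [Complex.ext_iff])
  simp only [Submodule.dense_iff_topologicalClosure_eq_top, Submodule.topologicalClosure_eq_top_iff]
  rw [heq, inf_idem] at hbot
  exact ⟨heq ▸ hbot, hbot⟩

theorem eq_zero_of_adjoint_add_smul_eq_zero (hdense : Dense (T.domain : Set L)) {c : ℂ}
    (hc : Dense (LinearMap.range (T.addScalar c) : Set L)) (v : T†.domain)
    (hv : T† v + (starRingEnd ℂ c) • (v : L) = 0) : (v : L) = 0 := by
  refine hc.eq_zero_of_inner_left ℂ ?_
  rintro _ ⟨φ, rfl⟩
  calc ⟪(v : L), T.addScalar c φ⟫_ℂ = ⟪T† v + (starRingEnd ℂ c) • (v : L), φ⟫_ℂ := by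
        rw [addScalar_apply, inner_add_right, inner_smul_right, inner_add_left, inner_smul_left,
          Complex.conj_conj, adjoint_isFormalAdjoint hdense v φ]
    _ = 0 := by rw [hv, inner_zero_left]

theorem exists_mem_closure_graph_snd_add_I_smul_fst (hT : T.IsFormalAdjoint T)
    (hI : Dense (LinearMap.range (T.addScalar I) : Set L)) (z : L) :
    ∃ p ∈ T.graph.topologicalClosure, p.2 + I • p.1 = z := by
  set Γ := T.graph.topologicalClosure
  set Φ : L × L →L[ℂ] L := ContinuousLinearMap.snd ℂ L L + I • ContinuousLinearMap.fst ℂ L L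
  have hbound : ∀ p ∈ Γ, ‖p‖ ≤ ‖Φ p‖ := by
    have hclosed : _root_.IsClosed {p : L × L | ‖p‖ ≤ ‖Φ p‖} :=
      isClosed_le (by fun_prop) (by fun_prop)
    intro p hp
    rw [← SetLike.mem_coe, T.graph.topologicalClosure_coe] at hp
    refine closure_minimal (fun q hq => ?_) hclosed hp
    obtain ⟨φ, rfl⟩ := T.mem_graph_iff'.1 hq
    simpa [Φ, add_comm] using norm_prod_le_norm_addScalar_I hT φ
  have : CompleteSpace Γ := T.graph.isClosed_topologicalClosure.completeSpace_coe
  have hclosed : _root_.IsClosed (Set.range (Φ ∘L Γ.subtypeL)) :=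
    ((Φ ∘L Γ.subtypeL).antilipschitz_of_bound (K := 1) fun p => by
      simpa using hbound p p.2).isClosed_range (Φ ∘L Γ.subtypeL).uniformContinuous
  have hsub : (LinearMap.range (T.addScalar I) : Set L) ⊆ Set.range (Φ ∘L Γ.subtypeL) := by
    rintro _ ⟨φ, rfl⟩
    exact ⟨⟨((φ : L), T φ), T.graph.le_topologicalClosure (T.mem_graph φ)⟩, by simp [Φ, add_comm]⟩
  obtain ⟨p, hp⟩ := (hclosed.closure_subset_iff.2 hsub) (hI z)
  exact ⟨p, p.2, hp⟩

section DenseRange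

variable (hdense : Dense (T.domain : Set L)) (hT : T.IsFormalAdjoint T)
  (hI : Dense (LinearMap.range (T.addScalar I) : Set L))
  (hnegI : Dense (LinearMap.range (T.addScalar (-I)) : Set L))
include hdense hT hI hnegI

theorem adjoint_graph_le_closure_graph : T†.graph ≤ T.graph.topologicalClosure := by
  intro q hq
  obtain ⟨x, rfl⟩ := T†.mem_graph_iff'.1 hq
  obtain ⟨p, hp, hpx⟩ := exists_mem_closure_graph_snd_add_I_smul_fst hT hI (T† x + I • (x : L))
  have hclosure : T.graph.topologicalClosure ≤ T†.graph :=
    Submodule.topologicalClosure_minimal _ (le_graph_of_le (hT.le_adjoint hdense))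
      (adjoint_isClosed hdense)
  obtain ⟨a, rfl⟩ := T†.mem_graph_iff'.1 (hclosure hp)
  have hxa : x = a := by
    rw [← sub_eq_zero, ← Subtype.coe_inj]
    refine eq_zero_of_adjoint_add_smul_eq_zero hdense hnegI (x - a) ?_
    rw [conj_neg_I, map_sub, Submodule.coe_sub]
    linear_combination (norm := module) -hpx
  rwa [hxa]

theorem isFormalAdjoint_adjoint_self : T†.IsFormalAdjoint T† := by
  intro x y
  have hclosed : _root_.IsClosed {p : L × L | ⟪p.2, (y : L)⟫_ℂ = ⟪p.1, T† y⟫_ℂ} :=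
    isClosed_eq (by fun_prop) (by fun_prop)
  have hgraph : (T.graph : Set (L × L)) ⊆ {p : L × L | ⟪p.2, (y : L)⟫_ℂ = ⟪p.1, T† y⟫_ℂ} := by
    intro q hq
    obtain ⟨φ, rfl⟩ := T.mem_graph_iff'.1 hq
    exact (adjoint_isFormalAdjoint hdense).symm φ y
  have hx := adjoint_graph_le_closure_graph hdense hT hI hnegI (T†.mem_graph x)
  rw [← SetLike.mem_coe, T.graph.topologicalClosure_coe] at hx
  exact closure_minimal hgraph hclosed hx

theorem adjoint_adjoint_eq_adjoint_of_dense_range : T†† = T† :=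
  le_antisymm (adjoint_le_adjoint hdense (hT.le_adjoint hdense))
    ((isFormalAdjoint_adjoint_self hdense hT hI hnegI).le_adjoint
      (hdense.mono (hT.le_adjoint hdense).1))

end DenseRange

end LinearPMap

/-- If a symmetric densely defined operator `T` on a complex Hilbert space `L` commutes with a
set `G` of unitary operators (closed under inverses) whose commutant is abelian, then `T` is
essentially self-adjoint, i.e. `T** = T*` (equivalently, the adjoint `T*` is self-adjoint, and
the closure `T**` of `T` is self-adjoint). -/
theorem essentiallySelfAdjoint_of_abelian_commutant
    {L : Type*} [NormedAddCommGroup L] [InnerProductSpace ℂ L] [CompleteSpace L]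
    (G : Set (L ≃ₗᵢ[ℂ] L))
    (hGinv : ∀ u ∈ G, u.symm ∈ G)
    (hcommutant : ∀ A B : L →L[ℂ] L,
      (∀ u ∈ G, ∀ x, A (u x) = u (A x)) →
      (∀ u ∈ G, ∀ x, B (u x) = u (B x)) →
      ∀ x, A (B x) = B (A x))
    (T : L →ₗ.[ℂ] L)
    (hdense : Dense (T.domain : Set L))
    (hsymm : ∀ φ ψ : T.domain, ⟪T φ, (ψ : L)⟫_ℂ = ⟪(φ : L), T ψ⟫_ℂ)
    (hcomm : ∀ u ∈ G, ∀ φ : T.domain, ∃ h : u (φ : L) ∈ T.domain,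
      T ⟨u (φ : L), h⟩ = u (T φ)) :
    T.adjoint.adjoint = T.adjoint := by
  have hT : T.IsFormalAdjoint T := hsymm
  set W := (LinearPMap.cayley hT).extendByZero
  have hW_comm : ∀ u ∈ G, ∀ x, W (u x) = u (W x) := fun u hu =>
    LinearPMap.extendByZero_cayley_map hT u (hcomm u hu) (hcomm u.symm (hGinv u hu))
  have hWadj_comm : ∀ u ∈ G, ∀ x, W.adjoint (u x) = u (W.adjoint x) := fun u hu =>
    ContinuousLinearMap.adjoint_apply_map (hW_comm u.symm (hGinv u hu))
  have hW : IsStarNormal W :=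
    ⟨ContinuousLinearMap.ext fun x => (hcommutant W _ hW_comm hWadj_comm x).symm⟩
  obtain ⟨hI, hnegI⟩ := LinearPMap.dense_range_addScalar_of_isStarNormal hdense hT hW
  exact LinearPMap.adjoint_adjoint_eq_adjoint_of_dense_range hdense hT hI hnegI
end

section
/- Let ℍ be the quaternions with Euclidean norm ‖·‖ and Lebesgue measure, and let F : ℍ → ℂ be continuous, bounded, and integrable. Then for every Λ > 0, the double integral of F(x·y) over the region {(x, y) : ‖x‖ ≤ Λ, ‖y‖ ≤ Λ} equals 2π² times the integral over {z : ‖z‖ ≤ Λ²} of log(Λ²/‖z‖)·F(z); that is, ∫_{‖x‖≤Λ} ∫_{‖y‖≤Λ} F(x·y) dx dy = 2π² ∫_{‖z‖≤Λ²} log(Λ²/‖z‖) · F(z) dz. -/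
/-!
Left multiplication by `x ≠ 0` in a normed division algebra `E` of dimension `n` over `ℝ`
scales Haar measure by `|det| = ‖x‖ⁿ`, so the inner integral equals
`‖x‖⁻ⁿ ∫_{‖z‖ ≤ ‖x‖Λ} F`. Polar coordinates in `x` turn the outer integral into
`n vol(B₁) ∫₀^Λ s⁻¹ ∫_{‖z‖ ≤ sΛ} F(z) dz ds`, and after exchanging the two integrals
`∫_{‖z‖/Λ}^Λ ds / s = log (Λ² / ‖z‖)`. For `ℍ`, `n vol(B₁) = 4 · π² / 2 = 2π²`.
-/

open MeasureTheory
open scoped Quaternion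

noncomputable instance : MeasurableSpace ℍ[ℝ] := borel _
instance : BorelSpace ℍ[ℝ] := ⟨rfl⟩

/-- Lebesgue measure on the quaternions, obtained by identifying `ℍ` with `ℝ⁴` via the
linear isometry with Euclidean 4-space. -/
noncomputable def quatVolume : Measure ℍ[ℝ] :=
  Measure.map (⇑Quaternion.linearIsometryEquivTuple.symm) volume

open Measure Metric Set Module

theorem integral_Ioo_indicator_Ici_inv {r Λ : ℝ} (hr : 0 < r) (hΛ : 0 < Λ) :
    ∫ s in Ioo 0 Λ, (Ici (r / Λ)).indicator (fun s => s⁻¹) s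
      = (Iic (Λ ^ 2)).indicator (fun r => Real.log (Λ ^ 2 / r)) r := by
  have ha : 0 < r / Λ := div_pos hr hΛ
  have hset : Ioo 0 Λ ∩ Ici (r / Λ) = Ico (r / Λ) Λ := by
    ext s; simp only [mem_inter_iff, mem_Ioo, mem_Ici, mem_Ico]
    constructor
    · rintro ⟨⟨-, hsΛ⟩, has⟩; exact ⟨has, hsΛ⟩
    · rintro ⟨has, hsΛ⟩; exact ⟨⟨ha.trans_le has, hsΛ⟩, has⟩
  have hlog : Real.log (Λ / (r / Λ)) = Real.log (Λ ^ 2 / r) := by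
    congr 1; field_simp
  rw [setIntegral_indicator measurableSet_Ici, hset, integral_Ico_eq_integral_Ioo,
    ← integral_Ioc_eq_integral_Ioo]
  by_cases hrΛ : r ≤ Λ ^ 2
  · have : r / Λ ≤ Λ := by rw [div_le_iff₀ hΛ]; nlinarith
    rw [← intervalIntegral.integral_of_le this, integral_inv_of_pos ha hΛ, hlog,
      indicator_of_mem (show r ∈ Iic (Λ ^ 2) from hrΛ)]
  · have : Λ ≤ r / Λ := by rw [le_div_iff₀ hΛ]; nlinarith
    rw [Ioc_eq_empty (not_lt.2 this), Measure.restrict_empty, integral_zero_measure,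
      indicator_of_notMem (show r ∉ Iic (Λ ^ 2) from hrΛ)]

section NormedSpace

variable {V G : Type*} [NormedAddCommGroup V] [NormedSpace ℝ V] [FiniteDimensional ℝ V]
  [Nontrivial V] [MeasurableSpace V] [BorelSpace V] (μ : Measure V) [μ.IsAddHaarMeasure]
  [NormedAddCommGroup G] [NormedSpace ℝ G]

theorem setIntegral_closedBall_inv_pow_norm_smul (ψ : ℝ → G) (r : ℝ) :
    ∫ x in closedBall (0 : V) r, (‖x‖ ^ finrank ℝ V)⁻¹ • ψ ‖x‖ ∂μ
      = (finrank ℝ V * μ.real (ball 0 1)) • ∫ s in Ioo 0 r, s⁻¹ • ψ s := by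
  obtain ⟨m, hm⟩ : ∃ m, finrank ℝ V = m + 1 := Nat.exists_eq_add_one.mpr finrank_pos
  have hpow : ∀ s ∈ Ioc (0 : ℝ) r,
      s ^ (finrank ℝ V - 1) • (s ^ finrank ℝ V)⁻¹ • ψ s = s⁻¹ • ψ s := by
    intro s hs
    rw [smul_smul, hm, Nat.add_sub_cancel, pow_succ, mul_inv, ← mul_assoc,
      mul_inv_cancel₀ (pow_ne_zero _ hs.1.ne'), one_mul]
  calc ∫ x in closedBall (0 : V) r, (‖x‖ ^ finrank ℝ V)⁻¹ • ψ ‖x‖ ∂μ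
      = ∫ x, (Iic r).indicator (fun s => (s ^ finrank ℝ V)⁻¹ • ψ s) ‖x‖ ∂μ := by
        rw [← integral_indicator measurableSet_closedBall]
        congr 1 with x
        by_cases h : ‖x‖ ≤ r <;> simp [h]
    _ = (finrank ℝ V * μ.real (ball 0 1)) •
          ∫ s in Ioc 0 r, s ^ (finrank ℝ V - 1) • (s ^ finrank ℝ V)⁻¹ • ψ s := by
        rw [integral_fun_norm_addHaar]
        simp_rw [← indicator_smul_apply (Iic r) (fun s : ℝ => s ^ (finrank ℝ V - 1))]
        rw [setIntegral_indicator measurableSet_Iic, Ioi_inter_Iic, ← Nat.cast_smul_eq_nsmul ℝ,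
          smul_smul]
    _ = _ := by rw [setIntegral_congr_fun measurableSet_Ioc hpow, integral_Ioc_eq_integral_Ioo]

theorem integral_norm_indicator_closedBall_inv_smul_le {F : V → G} {C Λ s : ℝ} (hs : 0 < s)
    (hΛ : 0 ≤ Λ) (hFb : ∀ z ∈ closedBall 0 (s * Λ), ‖F z‖ ≤ C) :
    ∫ z, ‖(closedBall 0 (s * Λ)).indicator (fun z => s⁻¹ • F z) z‖ ∂μ
      ≤ C * μ.real (ball 0 1) * Λ ^ finrank ℝ V * s ^ (finrank ℝ V - 1) := by
  obtain ⟨m, hm⟩ : ∃ m, finrank ℝ V = m + 1 := Nat.exists_eq_add_one.mpr finrank_pos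
  simp_rw [norm_indicator_eq_indicator_norm]
  rw [integral_indicator measurableSet_closedBall]
  refine (Real.le_norm_self _).trans <| (norm_setIntegral_le_of_norm_le_const (C := s⁻¹ * C)
    measure_closedBall_lt_top fun z hz => ?_).trans_eq ?_
  · rw [norm_norm, norm_smul, Real.norm_of_nonneg (inv_nonneg.2 hs.le)]
    exact mul_le_mul_of_nonneg_left (hFb z hz) (inv_nonneg.2 hs.le)
  · rw [addHaar_real_closedBall μ 0 (by positivity), hm, Nat.add_sub_cancel]
    field_simp
    ring

/-- Boundedness of `F` near `0` is what makes the kernel integrable: its `s`-slices have norm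
`O(s ^ (finrank ℝ V - 1))`, which compensates the factor `s⁻¹`. -/
theorem integrable_inv_smul_indicator_closedBall {F : V → G} {C Λ : ℝ}
    (hFm : AEStronglyMeasurable F μ) (hFb : ∀ z ∈ closedBall 0 (Λ ^ 2), ‖F z‖ ≤ C) :
    Integrable
      (fun p : ℝ × V => (closedBall 0 (p.1 * Λ)).indicator (fun z => p.1⁻¹ • F z) p.2)
      ((volume.restrict (Ioo 0 Λ)).prod μ) := by
  have hC : 0 ≤ C := (norm_nonneg _).trans (hFb 0 (mem_closedBall_self (sq_nonneg Λ)))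
  have hF_slice : ∀ s ∈ Ioo 0 Λ, ∀ z ∈ closedBall (0 : V) (s * Λ), ‖F z‖ ≤ C :=
    fun s ⟨hs, hsΛ⟩ z hz => hFb z (closedBall_subset_closedBall (by nlinarith) hz)
  have hmeas : AEStronglyMeasurable
      (fun p : ℝ × V => (closedBall 0 (p.1 * Λ)).indicator (fun z => p.1⁻¹ • F z) p.2)
      ((volume.restrict (Ioo 0 Λ)).prod μ) := by
    have hS : MeasurableSet {p : ℝ × V | ‖p.2‖ ≤ p.1 * Λ} :=
      measurableSet_le (by fun_prop) (by fun_prop)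
    convert ((measurable_fst.inv.aestronglyMeasurable).smul hFm.comp_snd).indicator hS using 1
    ext p
    by_cases h : ‖p.2‖ ≤ p.1 * Λ <;> simp [h]
  have hslice : ∀ s ∈ Ioo 0 Λ,
      ‖∫ z, ‖(closedBall 0 (s * Λ)).indicator (fun z => s⁻¹ • F z) z‖ ∂μ‖
        ≤ C * μ.real (ball 0 1) * Λ ^ finrank ℝ V * Λ ^ (finrank ℝ V - 1) := by
    intro s hs
    have hΛ : 0 ≤ Λ := (hs.1.trans hs.2).le
    rw [Real.norm_of_nonneg (integral_nonneg fun _ => norm_nonneg _)]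
    exact (integral_norm_indicator_closedBall_inv_smul_le μ hs.1 hΛ (hF_slice s hs)).trans
      (mul_le_mul_of_nonneg_left (pow_le_pow_left₀ hs.1.le hs.2.le _) (by positivity))
  refine (integrable_prod_iff hmeas).2
    ⟨ae_restrict_of_forall_mem measurableSet_Ioo fun s hs => ?_, ?_⟩
  · show Integrable ((closedBall (0 : V) (s * Λ)).indicator fun z => s⁻¹ • F z) μ
    refine IntegrableOn.integrable_indicator (Integrable.smul s⁻¹ ?_) measurableSet_closedBall
    exact IntegrableOn.of_bound measure_closedBall_lt_top hFm.restrict C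
      (ae_restrict_of_forall_mem measurableSet_closedBall (hF_slice s hs))
  · exact IntegrableOn.of_bound measure_Ioo_lt_top hmeas.norm.integral_prod_right' _
      (ae_restrict_of_forall_mem measurableSet_Ioo hslice)

theorem integral_Ioo_inv_smul_setIntegral_closedBall [CompleteSpace G] {F : V → G}
    {C Λ : ℝ} (hFm : AEStronglyMeasurable F μ) (hFb : ∀ z ∈ closedBall 0 (Λ ^ 2), ‖F z‖ ≤ C)
    (hΛ : 0 < Λ) :
    ∫ s in Ioo 0 Λ, s⁻¹ • ∫ z in closedBall 0 (s * Λ), F z ∂μ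
      = ∫ z in closedBall 0 (Λ ^ 2), Real.log (Λ ^ 2 / ‖z‖) • F z ∂μ := by
  have hinner : ∀ z : V, z ≠ 0 →
      ∫ s in Ioo 0 Λ, (closedBall 0 (s * Λ)).indicator (fun z => s⁻¹ • F z) z
        = (closedBall 0 (Λ ^ 2)).indicator (fun z => Real.log (Λ ^ 2 / ‖z‖) • F z) z := by
    intro z hz
    have hk : ∀ s, (closedBall 0 (s * Λ)).indicator (fun z => s⁻¹ • F z) z
        = (Ici (‖z‖ / Λ)).indicator (fun s => s⁻¹) s • F z := by
      intro s
      by_cases h : ‖z‖ ≤ s * Λ <;> simp [h, div_le_iff₀ hΛ]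
    simp_rw [hk]
    rw [integral_smul_const, integral_Ioo_indicator_Ici_inv (norm_pos_iff.2 hz) hΛ]
    by_cases h : ‖z‖ ≤ Λ ^ 2 <;> simp [h]
  calc ∫ s in Ioo 0 Λ, s⁻¹ • ∫ z in closedBall 0 (s * Λ), F z ∂μ
      = ∫ s in Ioo 0 Λ, ∫ z, (closedBall 0 (s * Λ)).indicator (fun z => s⁻¹ • F z) z ∂μ := by
        simp_rw [integral_indicator measurableSet_closedBall, integral_smul]
    _ = ∫ z, (∫ s in Ioo 0 Λ, (closedBall 0 (s * Λ)).indicator (fun z => s⁻¹ • F z) z)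
          ∂μ :=
        integral_integral_swap (integrable_inv_smul_indicator_closedBall μ hFm hFb)
    _ = ∫ z, (closedBall 0 (Λ ^ 2)).indicator (fun z => Real.log (Λ ^ 2 / ‖z‖) • F z) z
          ∂μ :=
        integral_congr_ae ((ae_ne μ 0).mono hinner)
    _ = _ := integral_indicator measurableSet_closedBall

end NormedSpace

section DivisionAlgebra

variable {E G : Type*} [NormedDivisionRing E] [NormedAlgebra ℝ E] [FiniteDimensional ℝ E]
  [NormedAddCommGroup G] [NormedSpace ℝ G]

theorem abs_det_mulLeft (x : E) :
    |LinearMap.det (LinearMap.mulLeft ℝ x)| = ‖x‖ ^ finrank ℝ E := by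
  rcases eq_or_ne x 0 with rfl | hx
  · rw [LinearMap.mulLeft_zero_eq_zero, LinearMap.det_zero, norm_zero, abs_pow, abs_zero]
  borelize E
  have himage : LinearMap.mulLeft ℝ x '' ball 0 1 = ball 0 ‖x‖ := by
    rw [show ⇑(LinearMap.mulLeft ℝ x) = Homeomorph.mulLeft₀ x hx from rfl,
      Homeomorph.image_eq_preimage_symm]
    ext z
    simp [norm_mul, inv_mul_lt_iff₀ (norm_pos_iff.2 hx)]
  have h := addHaar_image_linearMap addHaar (LinearMap.mulLeft ℝ x) (ball 0 1)
  rw [himage, addHaar_ball _ _ (norm_nonneg x), mul_comm, mul_comm (ENNReal.ofReal _)] at h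
  rw [← ENNReal.ofReal_eq_ofReal_iff (abs_nonneg _) (by positivity)]
  exact (ENNReal.mul_right_inj (measure_ball_pos _ _ one_pos).ne' measure_ball_lt_top.ne).1
    h.symm

variable [MeasurableSpace E] [BorelSpace E] (μ : Measure E) [μ.IsAddHaarMeasure]

theorem integral_comp_mul_left_addHaar (g : E → G) {x : E} (hx : x ≠ 0) :
    ∫ y, g (x * y) ∂μ = (‖x‖ ^ finrank ℝ E)⁻¹ • ∫ y, g y ∂μ := by
  have hdet : LinearMap.det (LinearMap.mulLeft ℝ x) ≠ 0 := by
    rw [← abs_pos, abs_det_mulLeft]; exact pow_pos (norm_pos_iff.2 hx) _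
  have hmap : μ.map (x * ·) = ENNReal.ofReal (‖x‖ ^ finrank ℝ E)⁻¹ • μ := by
    rw [← abs_det_mulLeft, ← abs_inv]
    exact map_linearMap_addHaar_eq_smul_addHaar μ hdet
  have hcomp : ∫ y, g (x * y) ∂μ = ∫ y, g y ∂(μ.map (x * ·)) :=
    (integral_map_equiv (Homeomorph.mulLeft₀ x hx).toMeasurableEquiv g).symm
  rw [hcomp, hmap, integral_smul_measure, ENNReal.toReal_ofReal (by positivity)]

theorem setIntegral_closedBall_comp_mul_left (g : E → G) {x : E} (hx : x ≠ 0) (r : ℝ) :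
    ∫ y in closedBall 0 r, g (x * y) ∂μ
      = (‖x‖ ^ finrank ℝ E)⁻¹ • ∫ z in closedBall 0 (‖x‖ * r), g z ∂μ := by
  have hpre : (x * ·) ⁻¹' closedBall 0 (‖x‖ * r) = closedBall 0 r := by
    ext y
    simp [norm_mul, mul_le_mul_iff_right₀ (norm_pos_iff.2 hx)]
  rw [← integral_indicator measurableSet_closedBall,
    ← integral_indicator measurableSet_closedBall, ← integral_comp_mul_left_addHaar μ _ hx, ← hpre]
  rfl

theorem setIntegral_closedBall_setIntegral_closedBall_mul [CompleteSpace G] {F : E → G}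
    (hF : Continuous F) {Λ : ℝ} (hΛ : 0 < Λ) :
    ∫ x in closedBall 0 Λ, ∫ y in closedBall 0 Λ, F (x * y) ∂μ ∂μ
      = (finrank ℝ E * μ.real (ball 0 1)) •
          ∫ z in closedBall 0 (Λ ^ 2), Real.log (Λ ^ 2 / ‖z‖) • F z ∂μ := by
  obtain ⟨C, hC⟩ :=
    (isCompact_closedBall (0 : E) (Λ ^ 2)).exists_bound_of_continuousOn hF.continuousOn
  calc ∫ x in closedBall 0 Λ, ∫ y in closedBall 0 Λ, F (x * y) ∂μ ∂μ
      = ∫ x in closedBall 0 Λ,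
          (‖x‖ ^ finrank ℝ E)⁻¹ • ∫ z in closedBall 0 (‖x‖ * Λ), F z ∂μ ∂μ :=
        setIntegral_congr_ae measurableSet_closedBall
          ((ae_ne μ 0).mono fun x hx _ => setIntegral_closedBall_comp_mul_left μ F hx Λ)
    _ = (finrank ℝ E * μ.real (ball 0 1)) •
          ∫ s in Ioo 0 Λ, s⁻¹ • ∫ z in closedBall 0 (s * Λ), F z ∂μ :=
        setIntegral_closedBall_inv_pow_norm_smul μ
          (fun s => ∫ z in closedBall 0 (s * Λ), F z ∂μ) Λ
    _ = _ := by
        rw [integral_Ioo_inv_smul_setIntegral_closedBall μ hF.aestronglyMeasurable hC hΛ]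

end DivisionAlgebra

theorem quatVolume_eq_volume : quatVolume = volume :=
  Quaternion.linearIsometryEquivTuple.symm.measurePreserving.map_eq

theorem Quaternion.volume_real_ball_zero_one :
    volume.real (ball (0 : ℍ[ℝ]) 1) = Real.pi ^ 2 / 2 := by
  rw [measureReal_def,
    InnerProductSpace.volume_ball_of_dim_even (k := 2) Quaternion.finrank_eq_four]
  simp [div_nonneg, sq_nonneg]

theorem double_integral_cutoff_eq_general (F : ℍ[ℝ] → ℂ) (hFc : Continuous F)
    (Λ : ℝ) (hΛ : 0 < Λ) :
    ∫ x in {x : ℍ[ℝ] | ‖x‖ ≤ Λ}, ∫ y in {y : ℍ[ℝ] | ‖y‖ ≤ Λ},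
        F (x * y) ∂quatVolume ∂quatVolume
      = (2 * Real.pi ^ 2 : ℂ) *
        ∫ z in {z : ℍ[ℝ] | ‖z‖ ≤ Λ ^ 2}, (Real.log (Λ ^ 2 / ‖z‖) : ℂ) * F z ∂quatVolume := by
  have hball (r : ℝ) : {x : ℍ[ℝ] | ‖x‖ ≤ r} = closedBall 0 r := by ext; simp
  rw [hball, hball, quatVolume_eq_volume,
    setIntegral_closedBall_setIntegral_closedBall_mul volume hFc hΛ, Quaternion.finrank_eq_four,
    Quaternion.volume_real_ball_zero_one]
  simp_rw [Complex.real_smul]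
  push_cast
  ring

/-- For a continuous, bounded, integrable `F : ℍ → ℂ` and `Λ > 0`,
`∫_{‖x‖≤Λ} ∫_{‖y‖≤Λ} F(x·y) dx dy = 2π² ∫_{‖z‖≤Λ²} log(Λ²/‖z‖) F(z) dz`. -/
theorem double_integral_cutoff_eq (F : ℍ[ℝ] → ℂ) (hFc : Continuous F)
    (hFb : ∃ C : ℝ, ∀ z, ‖F z‖ ≤ C) (hFi : Integrable F quatVolume)
    (Λ : ℝ) (hΛ : 0 < Λ) :
    ∫ x in {x : ℍ[ℝ] | ‖x‖ ≤ Λ}, ∫ y in {y : ℍ[ℝ] | ‖y‖ ≤ Λ},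
        F (x * y) ∂quatVolume ∂quatVolume
      = (2 * Real.pi ^ 2 : ℂ) *
        ∫ z in {z : ℍ[ℝ] | ‖z‖ ≤ Λ ^ 2}, (Real.log (Λ ^ 2 / ‖z‖) : ℂ) * F z ∂quatVolume :=
  double_integral_cutoff_eq_general F hFc Λ hΛ
end
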